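/- arXiv:1703.00238 — 4 statements merged into one kernel-verified Lean document; each statement's English description precedes it below -/
import Mathlib

section
/- Let (Z, d₁) be a bounded metric space with diameter at most D. On Con(Z) = Z × (0, D), define d₂((x,u),(y,v)) = 2 log( (d₁(x,y) + max(u,v)) / √(uv) ). Then for any fixed base point o = (z,s) with s ∈ (0,D), and any two distinct points x, y ∈ Z with d₁(x,y) < s, the Gromov product of (x,u) and (y,v) at o equals log( (d₁(x,z)+s)(d₁(y,z)+s) / ( s (d₁(x,y) + max(u,v)) ) ) whenever 0 < u, v < d₁(x,y). -/
open Filter Topology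

/-- The Bonk–Schramm hyperbolic filling function on `Z × (0, D)`. -/
noncomputable def fillingDist {Z : Type*} [MetricSpace Z] (a b : Z × ℝ) : ℝ :=
  2 * Real.log ((dist a.1 b.1 + max a.2 b.2) / Real.sqrt (a.2 * b.2))

/-- The Gromov product of `a` and `b` at `o` with respect to a distance-like
function `ρ`. -/
noncomputable def gromovProd {X : Type*} (ρ : X → X → ℝ) (o a b : X) : ℝ :=
  (ρ a o + ρ b o - ρ a b) / 2

/-- Explicit formula for the Gromov product in the hyperbolic filling of a bounded
metric space `(Z, d₁)` of diameter at most `D`, with base point `o = (z, s)`. -/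
theorem gromovProd_filling_eq {Z : Type*} [MetricSpace Z] (D : ℝ)
    (hbdd : ∀ x y : Z, dist x y ≤ D)
    (z : Z) (s : ℝ) (hs0 : 0 < s) (hsD : s < D)
    (x y : Z) (hxy : x ≠ y) (hd : dist x y < s)
    (u v : ℝ) (hu0 : 0 < u) (hv0 : 0 < v)
    (hu : u < dist x y) (hv : v < dist x y) :
    gromovProd fillingDist (z, s) (x, u) (y, v) =
      Real.log ((dist x z + s) * (dist y z + s) / (s * (dist x y + max u v))) := by
  have hdxy : 0 < dist x y := dist_pos.mpr hxy
  have hus : max u s = s := max_eq_right (le_of_lt (hu.trans hd))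
  have hvs : max v s = s := max_eq_right (le_of_lt (hv.trans hd))
  have hxz : 0 < dist x z + s := by positivity
  have hyz : 0 < dist y z + s := by positivity
  have hmuv : 0 < max u v := lt_max_of_lt_left hu0
  have hC : 0 < dist x y + max u v := by positivity
  have hsu : Real.sqrt (u * s) = Real.sqrt u * Real.sqrt s := Real.sqrt_mul hu0.le s
  have hsv : Real.sqrt (v * s) = Real.sqrt v * Real.sqrt s := Real.sqrt_mul hv0.le s
  have hsuv : Real.sqrt (u * v) = Real.sqrt u * Real.sqrt v := Real.sqrt_mul hu0.le v
  have squ : 0 < Real.sqrt u := Real.sqrt_pos.mpr hu0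
  have sqv : 0 < Real.sqrt v := Real.sqrt_pos.mpr hv0
  have sqs : 0 < Real.sqrt s := Real.sqrt_pos.mpr hs0
  simp only [gromovProd, fillingDist, hus, hvs]
  rw [show (2 * Real.log ((dist x z + s) / Real.sqrt (u * s)) +
      2 * Real.log ((dist y z + s) / Real.sqrt (v * s)) -
      2 * Real.log ((dist x y + max u v) / Real.sqrt (u * v))) / 2
      = Real.log ((dist x z + s) / Real.sqrt (u * s)) +
        Real.log ((dist y z + s) / Real.sqrt (v * s)) -
        Real.log ((dist x y + max u v) / Real.sqrt (u * v)) by ring]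
  rw [← Real.log_mul (by positivity) (by positivity), ← Real.log_div (by positivity) (by positivity)]
  congr 1
  rw [hsu, hsv, hsuv]
  have hss : Real.sqrt s * Real.sqrt s = s := Real.mul_self_sqrt hs0.le
  field_simp
  ring_nf
  rw [Real.sq_sqrt hs0.le]
end

section
/- With the hyperbolic filling d₂ on Con(Z) = Z × (0,D) over a bounded metric space (Z, d₁), base point o = (z,s), and distinct x, y ∈ Z with d₁(x,y) < s, the limit as u, v → 0⁺ of exp(−⟨(x,u),(y,v)⟩_o) / d₁(x,y) exists and equals s / ( (d₁(x,z)+s)(d₁(y,z)+s) ). -/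
open Filter Topology

/-- In the hyperbolic filling of a bounded metric space `(Z, d₁)` with base point
`o = (z, s)`, for distinct `x, y` with `d₁(x,y) < s`, the limit as `u, v → 0⁺` of
`exp(−⟨(x,u),(y,v)⟩_o)/d₁(x,y)` exists and equals
`s / ((d₁(x,z)+s)(d₁(y,z)+s))`. -/
theorem tendsto_exp_neg_gromovProd_filling {Z : Type*} [MetricSpace Z] (D : ℝ)
    (hbdd : ∀ x y : Z, dist x y ≤ D)
    (z : Z) (s : ℝ) (hs0 : 0 < s) (hsD : s < D)
    (x y : Z) (hxy : x ≠ y) (hd : dist x y < s) :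
    Filter.Tendsto
      (fun uv : ℝ × ℝ =>
        Real.exp (-(gromovProd fillingDist (z, s) (x, uv.1) (y, uv.2))) / dist x y)
      ((𝓝[>] (0:ℝ)) ×ˢ (𝓝[>] (0:ℝ)))
      (𝓝 (s / ((dist x z + s) * (dist y z + s)))) := by
  have hdxy : (0:ℝ) < dist x y := dist_pos.2 hxy
  have hxz : (0:ℝ) < dist x z + s := by positivity
  have hyz : (0:ℝ) < dist y z + s := by positivity
  set L : ℝ := s / ((dist x z + s) * (dist y z + s)) with hL
  -- the simplified function
  set g : ℝ × ℝ → ℝ := fun uv =>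
    s * (dist x y + max uv.1 uv.2) / (dist x y * ((dist x z + s) * (dist y z + s))) with hg
  have hmax : Tendsto (fun uv : ℝ × ℝ => max uv.1 uv.2)
      ((𝓝[>] (0:ℝ)) ×ˢ (𝓝[>] (0:ℝ))) (𝓝 (0:ℝ)) := by
    have h1 : Tendsto (fun uv : ℝ × ℝ => uv.1) ((𝓝[>] (0:ℝ)) ×ˢ (𝓝[>] (0:ℝ))) (𝓝 0) :=
      (tendsto_fst.mono_right (nhdsWithin_le_nhds))
    have h2 : Tendsto (fun uv : ℝ × ℝ => uv.2) ((𝓝[>] (0:ℝ)) ×ˢ (𝓝[>] (0:ℝ))) (𝓝 0) :=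
      (tendsto_snd.mono_right (nhdsWithin_le_nhds))
    simpa using h1.max h2
  have hgL : Tendsto g ((𝓝[>] (0:ℝ)) ×ˢ (𝓝[>] (0:ℝ))) (𝓝 L) := by
    have : Tendsto (fun uv : ℝ × ℝ =>
        s * (dist x y + max uv.1 uv.2) / (dist x y * ((dist x z + s) * (dist y z + s))))
        ((𝓝[>] (0:ℝ)) ×ˢ (𝓝[>] (0:ℝ)))
        (𝓝 (s * (dist x y + 0) / (dist x y * ((dist x z + s) * (dist y z + s))))) := by
      exact ((tendsto_const_nhds.mul (tendsto_const_nhds.add hmax)).div_const _)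
    convert this using 2
    rw [hL]
    field_simp
    ring
  refine hgL.congr' ?_
  have hev : ∀ᶠ uv : ℝ × ℝ in (𝓝[>] (0:ℝ)) ×ˢ (𝓝[>] (0:ℝ)),
      uv.1 ∈ Set.Ioo (0:ℝ) s ∧ uv.2 ∈ Set.Ioo (0:ℝ) s := by
    have h : Set.Ioo (0:ℝ) s ∈ 𝓝[>] (0:ℝ) := Ioo_mem_nhdsGT_of_mem ⟨le_refl _, hs0⟩
    exact Filter.eventually_iff_exists_mem.2 ⟨_, prod_mem_prod h h, fun uv huv => huv⟩
  filter_upwards [hev] with uv huv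
  obtain ⟨⟨hu0, hus⟩, ⟨hv0, hvs⟩⟩ := huv
  set u := uv.1
  set v := uv.2
  have hsu : Real.sqrt (u * s) = Real.sqrt u * Real.sqrt s := Real.sqrt_mul hu0.le _
  have hsv : Real.sqrt (v * s) = Real.sqrt v * Real.sqrt s := Real.sqrt_mul hv0.le _
  have hsuv : Real.sqrt (u * v) = Real.sqrt u * Real.sqrt v := Real.sqrt_mul hu0.le _
  have hru : (0:ℝ) < Real.sqrt u := Real.sqrt_pos.2 hu0
  have hrv : (0:ℝ) < Real.sqrt v := Real.sqrt_pos.2 hv0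
  have hrs : (0:ℝ) < Real.sqrt s := Real.sqrt_pos.2 hs0
  have hss : Real.sqrt s * Real.sqrt s = s := Real.mul_self_sqrt hs0.le
  have hmus : max u s = s := max_eq_right hus.le
  have hmvs : max v s = s := max_eq_right hvs.le
  -- the three quantities
  set A : ℝ := (dist x z + s) / (Real.sqrt u * Real.sqrt s) with hA
  set B : ℝ := (dist y z + s) / (Real.sqrt v * Real.sqrt s) with hB
  set C : ℝ := (dist x y + max u v) / (Real.sqrt u * Real.sqrt v) with hC
  have hApos : 0 < A := by apply div_pos hxz; positivity
  have hBpos : 0 < B := by apply div_pos hyz; positivity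
  have hCpos : 0 < C := by
    apply div_pos; · have : 0 ≤ max u v := le_max_of_le_left hu0.le; linarith
    positivity
  have hgp : gromovProd fillingDist (z, s) (x, u) (y, v)
      = Real.log A + Real.log B - Real.log C := by
    simp only [gromovProd, fillingDist]
    rw [hsu, hsv, hsuv, hmus, hmvs]
    ring
  have hexp : Real.exp (-(gromovProd fillingDist (z, s) (x, u) (y, v))) = C / (A * B) := by
    rw [hgp]
    rw [show -(Real.log A + Real.log B - Real.log C)
        = Real.log C - Real.log (A * B) by rw [Real.log_mul hApos.ne' hBpos.ne']; ring]
    rw [← Real.log_div hCpos.ne' (by positivity), Real.exp_log (by positivity)]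
  have hCAB : C / (A * B) = s * (dist x y + max u v) / ((dist x z + s) * (dist y z + s)) := by
    rw [hA, hB, hC]
    field_simp
    ring_nf
    rw [Real.sq_sqrt hs0.le]
  show _ = _
  rw [hexp, hCAB, hg]
  rw [div_div, mul_comm (dist x y)]
end

section
/- Let (Z, d₁) be a bounded metric space, d₂ the Bourdon function of the hyperbolic filling of (Z, d₁) with base point o = (z,s), defined by d₂(x,y) = lim_{u,v→0⁺} exp(−⟨(x,u),(y,v)⟩_o). Then for every fixed x ∈ Z that is a limit point, the limit lim_{y→x} d₂(x,y)/d₁(x,y) exists and equals s/(d₁(x,z)+s)². Consequently the identity map (Z, d₁) → (Z, d₂) has pointwise distortion H* identically equal to 1, i.e., d₁ and d₂ are conformally equivalent. -/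
open Filter Topology

/-- The Bourdon function of the hyperbolic filling of `(Z, d₁)` with base point
`o = (z, s)`; by direct computation, the defining limit
`lim_{u,v→0⁺} exp(−⟨(x,u),(y,v)⟩_o)` equals this explicit expression. -/
noncomputable def bourdon {Z : Type*} [MetricSpace Z] (z : Z) (s : ℝ) (x y : Z) : ℝ :=
  s * dist x y / ((dist x z + s) * (dist y z + s))

/-- For the Bourdon function `d₂` of the hyperbolic filling of a bounded metric
space `(Z, d₁)`, at every limit point `x` the limit `lim_{y→x} d₂(x,y)/d₁(x,y)`
exists and equals `s/(d₁(x,z)+s)²`; consequently the identity map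
`(Z,d₁) → (Z,d₂)` has pointwise distortion `H* ≡ 1`, i.e. `d₁` and `d₂` are
conformally equivalent. -/
theorem bourdon_conformal {Z : Type*} [MetricSpace Z] (D : ℝ)
    (hbdd : ∀ x y : Z, dist x y ≤ D)
    (z : Z) (s : ℝ) (hs0 : 0 < s) (hsD : s < D)
    (x : Z) (hx : (𝓝[≠] x).NeBot) :
    Filter.Tendsto (fun y => bourdon z s x y / dist x y) (𝓝[≠] x)
      (𝓝 (s / (dist x z + s) ^ 2)) ∧
    Filter.limsup (fun y => bourdon z s x y / dist x y) (𝓝[≠] x) /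
      Filter.liminf (fun y => bourdon z s x y / dist x y) (𝓝[≠] x) = 1 := by
  have hxz : 0 < dist x z + s := by positivity
  have hL : 0 < s / (dist x z + s) ^ 2 := by positivity
  have hT : Filter.Tendsto (fun y => bourdon z s x y / dist x y) (𝓝[≠] x)
      (𝓝 (s / (dist x z + s) ^ 2)) := by
    have hcont : Filter.Tendsto (fun y : Z => s / ((dist x z + s) * (dist y z + s)))
        (𝓝[≠] x) (𝓝 (s / (dist x z + s) ^ 2)) := by
      have : Filter.Tendsto (fun y : Z => s / ((dist x z + s) * (dist y z + s)))
          (𝓝 x) (𝓝 (s / ((dist x z + s) * (dist x z + s)))) := by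
        apply Filter.Tendsto.div tendsto_const_nhds
        · exact (tendsto_const_nhds.mul (((continuous_id.dist continuous_const).tendsto x).add
            tendsto_const_nhds))
        · positivity
      rw [← sq] at this
      exact this.mono_left nhdsWithin_le_nhds
    refine hcont.congr' ?_
    filter_upwards [self_mem_nhdsWithin] with y hy
    have hd : dist x y ≠ 0 := by
      simp only [Set.mem_compl_iff, Set.mem_singleton_iff] at hy
      exact fun h => hy (dist_eq_zero.mp h).symm
    unfold bourdon
    field_simp
  refine ⟨hT, ?_⟩
  rw [hT.limsup_eq, hT.liminf_eq, div_self hL.ne']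
end

section
/- Let (Z, d₁) be a bounded metric space with base point z ∈ Z and s > 0. Define ρ(x,y) = s·d₁(x,y) / ((d₁(x,z)+s)(d₁(y,z)+s)). Then ρ is a quasi-distance: it is symmetric, vanishes exactly on the diagonal, and satisfies the triangle inequality up to a multiplicative constant, namely ρ(x,y) ≤ C(ρ(x,w) + ρ(w,y)) for all x,y,w ∈ Z with C = (diam(Z)+s)/s. -/
open Filter Topology Metric

/- Write `ρ(x,y) = s·d(x,y)·φ(x)·φ(y)` with `φ(x) = 1/(d(x,z)+s)`. The triangle inequality for `d`
gives `ρ(x,y) ≤ ρ(x,w)·φ(y)/φ(w) + ρ(w,y)·φ(x)/φ(w)`, and every ratio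
`φ(y)/φ(w) = (d(w,z)+s)/(d(y,z)+s)` is at most `(diam Z + s)/s`. -/

section Bourdon

variable {Z : Type*} [MetricSpace Z] {z : Z} {s : ℝ}

theorem bourdon_comm (z : Z) (s : ℝ) (x y : Z) : bourdon z s x y = bourdon z s y x := by
  unfold bourdon
  rw [dist_comm x y]
  ring

theorem bourdon_nonneg (hs : 0 ≤ s) (x y : Z) : 0 ≤ bourdon z s x y := by
  unfold bourdon
  positivity

theorem bourdon_eq_zero_iff (hs : 0 < s) {x y : Z} : bourdon z s x y = 0 ↔ x = y := by
  have hden : (dist x z + s) * (dist y z + s) ≠ 0 := by positivity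
  simp [bourdon, hden, hs.ne']

theorem bourdon_mul_ratio (hs : 0 < s) (x w y : Z) :
    bourdon z s x w * ((dist w z + s) / (dist y z + s)) =
      s * dist x w / ((dist x z + s) * (dist y z + s)) := by
  have hw : dist w z + s ≠ 0 := by positivity
  unfold bourdon
  field_simp

theorem bourdon_le_add_mul_ratio (hs : 0 < s) (x y w : Z) :
    bourdon z s x y ≤
      bourdon z s x w * ((dist w z + s) / (dist y z + s)) +
        bourdon z s w y * ((dist w z + s) / (dist x z + s)) := by
  rw [bourdon_mul_ratio hs, ← bourdon_comm z s y w, bourdon_mul_ratio hs, dist_comm y w,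
    mul_comm (dist y z + s), ← add_div, ← mul_add]
  unfold bourdon
  gcongr
  exact dist_triangle x w y

theorem dist_add_div_dist_add_le (hbdd : Bornology.IsBounded (Set.univ : Set Z)) (hs : 0 < s)
    (w y : Z) : (dist w z + s) / (dist y z + s) ≤ (diam (Set.univ : Set Z) + s) / s := by
  have hw : dist w z ≤ diam (Set.univ : Set Z) := dist_le_diam_of_mem hbdd trivial trivial
  rw [div_le_div_iff₀ (by positivity) hs]
  have hy : s ≤ dist y z + s := le_add_of_nonneg_left dist_nonneg
  exact mul_le_mul (by linarith) hy hs.le (by positivity)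

theorem bourdon_le_mul_add (hbdd : Bornology.IsBounded (Set.univ : Set Z)) (hs : 0 < s)
    (x y w : Z) :
    bourdon z s x y ≤
      ((diam (Set.univ : Set Z) + s) / s) * (bourdon z s x w + bourdon z s w y) := by
  have hx := bourdon_nonneg hs.le (z := z) x w
  have hy := bourdon_nonneg hs.le (z := z) w y
  calc bourdon z s x y
      ≤ bourdon z s x w * ((dist w z + s) / (dist y z + s)) +
          bourdon z s w y * ((dist w z + s) / (dist x z + s)) :=
        bourdon_le_add_mul_ratio hs x y w
    _ ≤ bourdon z s x w * ((diam (Set.univ : Set Z) + s) / s) +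
          bourdon z s w y * ((diam (Set.univ : Set Z) + s) / s) := by
        gcongr ?_ * ?_ + ?_ * ?_ <;> exact dist_add_div_dist_add_le hbdd hs _ _
    _ = ((diam (Set.univ : Set Z) + s) / s) * (bourdon z s x w + bourdon z s w y) := by ring

end Bourdon

/-- The Bourdon function `ρ` is a quasi-distance: it is symmetric, vanishes
exactly on the diagonal, and satisfies the triangle inequality up to the
multiplicative constant `C = (diam Z + s)/s`. -/
theorem bourdon_quasiDistance {Z : Type*} [MetricSpace Z]
    (hbdd : Bornology.IsBounded (Set.univ : Set Z))
    (z : Z) (s : ℝ) (hs : 0 < s) :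
    (∀ x y : Z, bourdon z s x y = bourdon z s y x) ∧
    (∀ x y : Z, bourdon z s x y = 0 ↔ x = y) ∧
    (∀ x y w : Z, bourdon z s x y ≤
      ((Metric.diam (Set.univ : Set Z) + s) / s) *
        (bourdon z s x w + bourdon z s w y)) :=
  ⟨bourdon_comm z s, fun _ _ => bourdon_eq_zero_iff hs, bourdon_le_mul_add hbdd hs⟩
end
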